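/- arXiv:1101.4731 — 4 statements merged into one kernel-verified Lean document; each statement's English description precedes it below -/
import Mathlib

section
/- Weak modal refinement is transitive: if S ≤_m* T and T ≤_m* U for MIOs S, T, U with the same signature, then S ≤_m* U. -/
/-- A modal I/O-transition system (MIO): states, an initial state, a signature of
input, output and internal actions (pairwise disjoint subsets of the action
universe `A`), may-transitions and must-transitions with must ⊆ may. -/
structure MIO (A : Type) where
  State : Type
  start : State
  inp : Set A
  out : Set A
  intl : Set A
  may : State → A → State → Prop
  must : State → A → State → Prop
  inp_out : ∀ a, a ∈ inp → a ∈ out → False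
  inp_intl : ∀ a, a ∈ inp → a ∈ intl → False
  out_intl : ∀ a, a ∈ out → a ∈ intl → False
  must_sub : ∀ s a s', must s a s' → may s a s'

namespace MIO

variable {A B : Type}

/-- The set of all actions of a MIO. -/
def act (S : MIO A) : Set A := S.inp ∪ S.out ∪ S.intl

/-- Two MIOs have the same signature. -/
def SigEq (S T : MIO A) : Prop := S.inp = T.inp ∧ S.out = T.out ∧ S.intl = T.intl

/-- Strong modal refinement `S ≤_m T`. -/
def StrongRefines (S T : MIO A) : Prop :=
  SigEq S T ∧
  ∃ R : S.State → T.State → Prop, R S.start T.start ∧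
    ∀ s t, R s t →
      (∀ a t', T.must t a t' → ∃ s', S.must s a s' ∧ R s' t') ∧
      (∀ a s', S.may s a s' → ∃ t', T.may t a t' ∧ R s' t')

/-- One internal must-transition. -/
def tauMust (S : MIO A) (s s' : S.State) : Prop := ∃ a ∈ S.intl, S.must s a s'

/-- Finitely many (possibly zero) internal must-transitions. -/
def tauMustStar (S : MIO A) : S.State → S.State → Prop := Relation.ReflTransGen S.tauMust

/-- One internal may-transition. -/
def tauMay (S : MIO A) (s s' : S.State) : Prop := ∃ a ∈ S.intl, S.may s a s'

/-- Finitely many (possibly zero) internal may-transitions. -/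
def tauMayStar (S : MIO A) : S.State → S.State → Prop := Relation.ReflTransGen S.tauMay

/-- Weak modal refinement `S ≤_m* T`. -/
def WeakRefines (S T : MIO A) : Prop :=
  SigEq S T ∧
  ∃ R : S.State → T.State → Prop, R S.start T.start ∧
    ∀ s t, R s t →
      (∀ a ∈ T.inp ∪ T.out, ∀ t', T.must t a t' →
        ∃ s1 s2 s', S.tauMustStar s s1 ∧ S.must s1 a s2 ∧ S.tauMustStar s2 s' ∧ R s' t') ∧
      (∀ a ∈ T.intl, ∀ t', T.must t a t' → ∃ s', S.tauMustStar s s' ∧ R s' t') ∧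
      (∀ a ∈ S.inp ∪ S.out, ∀ s', S.may s a s' →
        ∃ t1 t2 t', T.tauMayStar t t1 ∧ T.may t1 a t2 ∧ T.tauMayStar t2 t' ∧ R s' t') ∧
      (∀ a ∈ S.intl, ∀ s', S.may s a s' → ∃ t', T.tauMayStar t t' ∧ R s' t')

/-- Shared actions of two MIOs. -/
def shared (S T : MIO A) : Set A := S.act ∩ T.act

/-- Two MIOs are (syntactically) composable if their actions overlap only on
complementary types. -/
def Composable (S T : MIO A) : Prop :=
  shared S T ⊆ (S.inp ∩ T.out) ∪ (T.inp ∩ S.out)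

/-- Synchronous composition `S ⊗_sy T` of composable MIOs. -/
def syncComp (S T : MIO A) (_h : Composable S T) : MIO A where
  State := S.State × T.State
  start := (S.start, T.start)
  inp := (S.inp ∪ T.inp) \ shared S T
  out := (S.out ∪ T.out) \ shared S T
  intl := S.intl ∪ T.intl ∪ shared S T
  may p a p' :=
    (a ∈ shared S T ∧ S.may p.1 a p'.1 ∧ T.may p.2 a p'.2) ∨
    (a ∈ S.act ∧ a ∉ shared S T ∧ S.may p.1 a p'.1 ∧ p'.2 = p.2) ∨
    (a ∈ T.act ∧ a ∉ shared S T ∧ T.may p.2 a p'.2 ∧ p'.1 = p.1)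
  must p a p' :=
    (a ∈ shared S T ∧ S.must p.1 a p'.1 ∧ T.must p.2 a p'.2) ∨
    (a ∈ S.act ∧ a ∉ shared S T ∧ S.must p.1 a p'.1 ∧ p'.2 = p.2) ∨
    (a ∈ T.act ∧ a ∉ shared S T ∧ T.must p.2 a p'.2 ∧ p'.1 = p.1)
  inp_out := by
    intro a ha hb
    have h1 := S.inp_out a; have h2 := T.inp_out a
    simp only [Set.mem_diff, Set.mem_union, shared, act, Set.mem_inter_iff] at ha hb
    tauto
  inp_intl := by
    intro a ha hb
    have h1 := S.inp_intl a; have h2 := T.inp_intl a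
    simp only [Set.mem_diff, Set.mem_union, shared, act, Set.mem_inter_iff] at ha hb
    tauto
  out_intl := by
    intro a ha hb
    have h1 := S.out_intl a; have h2 := T.out_intl a
    simp only [Set.mem_diff, Set.mem_union, shared, act, Set.mem_inter_iff] at ha hb
    tauto
  must_sub := by
    rintro p a p' (⟨h1, h2, h3⟩ | ⟨h1, h2, h3, h4⟩ | ⟨h1, h2, h3, h4⟩)
    · exact Or.inl ⟨h1, S.must_sub _ _ _ h2, T.must_sub _ _ _ h3⟩
    · exact Or.inr (Or.inl ⟨h1, h2, S.must_sub _ _ _ h3, h4⟩)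
    · exact Or.inr (Or.inr ⟨h1, h2, T.must_sub _ _ _ h3, h4⟩)

/-- Reachability (w.r.t. may-transitions) from the initial state. -/
def Reachable (M : MIO A) (s : M.State) : Prop :=
  Relation.ReflTransGen (fun x y => ∃ a, M.may x a y) M.start s

/-- Strong modal compatibility `S ⇄_sc T`. -/
def StrongCompat (S T : MIO A) : Prop :=
  ∃ h : Composable S T,
    ∀ p : S.State × T.State, (syncComp S T h).Reachable p →
      (∀ a ∈ S.out ∩ T.inp, ∀ s', S.may p.1 a s' → ∃ t', T.must p.2 a t') ∧
      (∀ a ∈ T.out ∩ S.inp, ∀ t', T.may p.2 a t' → ∃ s', S.must p.1 a s')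

/-- Weak modal compatibility `S ⇄_wc T`. -/
def WeakCompat (S T : MIO A) : Prop :=
  ∃ h : Composable S T,
    ∀ p : S.State × T.State, (syncComp S T h).Reachable p →
      (∀ a ∈ S.out ∩ T.inp, ∀ s', S.may p.1 a s' →
        ∃ t1 t', T.tauMustStar p.2 t1 ∧ T.must t1 a t') ∧
      (∀ a ∈ T.out ∩ S.inp, ∀ t', T.may p.2 a t' →
        ∃ s1 s', S.tauMustStar p.1 s1 ∧ S.must s1 a s')

/-- Finite executions: `Trace M s as s'` means `M` can go from `s` to `s'` by
a sequence of may-transitions labelled by the list of actions `as`. -/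
inductive Trace (M : MIO A) : M.State → List A → M.State → Prop
  | nil (s : M.State) : Trace M s [] s
  | cons {s s' s'' : M.State} {a : A} {as : List A} :
      M.may s a s' → Trace M s' as s'' → Trace M s (a :: as) s''

/-- Renaming the actions of a MIO along an injective function. -/
def rename (f : A → B) (hf : Function.Injective f) (S : MIO A) : MIO B where
  State := S.State
  start := S.start
  inp := f '' S.inp
  out := f '' S.out
  intl := f '' S.intl
  may s b s' := ∃ a, b = f a ∧ S.may s a s'
  must s b s' := ∃ a, b = f a ∧ S.must s a s'
  inp_out := by
    rintro b ⟨a1, h1, rfl⟩ ⟨a2, h2, heq⟩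
    obtain rfl := hf heq
    exact S.inp_out a2 h1 h2
  inp_intl := by
    rintro b ⟨a1, h1, rfl⟩ ⟨a2, h2, heq⟩
    obtain rfl := hf heq
    exact S.inp_intl a2 h1 h2
  out_intl := by
    rintro b ⟨a1, h1, rfl⟩ ⟨a2, h2, heq⟩
    obtain rfl := hf heq
    exact S.out_intl a2 h1 h2
  must_sub := by
    rintro s b s' ⟨a, rfl, h⟩
    exact ⟨a, rfl, S.must_sub _ _ _ h⟩

-- Tagging function: actions in `o` become the fresh "queue input" actions `n^▷`
-- (encoded as `Sum.inr n`), all other actions are kept (as `Sum.inl a`).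
open Classical in
noncomputable def tagged (o : Set A) : A → A ⊕ A :=
  fun a => if a ∈ o then Sum.inr a else Sum.inl a

theorem tagged_injective (o : Set A) : Function.Injective (tagged o) := by
  classical
  intro a b h
  by_cases ha : a ∈ o <;> by_cases hb : b ∈ o <;>
    simp [tagged, ha, hb] at h <;> tauto

/-- The queue MIO `Q_o`: a FIFO buffer for messages in `o`. States are finite
strings over `A` (with reachable states being strings over `o`), inputs are the
tagged actions `n^▷ = Sum.inr n`, outputs the actions `n = Sum.inl n` for `n ∈ o`.
Enqueue at the front, dequeue from the back; may- and must-transitions coincide. -/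
def queueMIO (o : Set A) : MIO (A ⊕ A) where
  State := List A
  start := []
  inp := Sum.inr '' o
  out := Sum.inl '' o
  intl := ∅
  may s b s' :=
    (∃ n ∈ o, b = Sum.inr n ∧ s' = n :: s) ∨ (∃ n ∈ o, b = Sum.inl n ∧ s = s' ++ [n])
  must s b s' :=
    (∃ n ∈ o, b = Sum.inr n ∧ s' = n :: s) ∨ (∃ n ∈ o, b = Sum.inl n ∧ s = s' ++ [n])
  inp_out := by rintro b ⟨n, hn, rfl⟩ ⟨m, hm, h⟩; simp at h
  inp_intl := by rintro b _ h; simp at h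
  out_intl := by rintro b _ h; simp at h
  must_sub := fun _ _ _ h => h

theorem omega_composable (o : Set A) (S : MIO A) (ho : o ⊆ S.out) :
    Composable (rename (tagged o) (tagged_injective o) S) (queueMIO o) := by
  classical
  rintro b ⟨hb1, hb2⟩
  have hq : (∃ n ∈ o, Sum.inr n = b) ∨ (∃ n ∈ o, Sum.inl n = b) := by
    simpa [queueMIO, act, Set.image, Set.mem_union] using hb2
  have hr : ∃ a, ((a ∈ S.inp ∨ a ∈ S.out) ∨ a ∈ S.intl) ∧ tagged o a = b := by
    simpa [rename, act, ← Set.image_union] using hb1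
  obtain ⟨a, _, ha⟩ := hr
  rcases hq with ⟨n, hn, hb⟩ | ⟨n, hn, hb⟩
  · right
    constructor
    · exact ⟨n, hn, hb⟩
    · refine ⟨n, ho hn, ?_⟩
      rw [← hb]; simp [tagged, hn]
  · exfalso
    rw [← hb] at ha
    by_cases h : a ∈ o
    · simp [tagged, h] at ha
    · simp [tagged, h] at ha
      exact h (ha ▸ hn)

/-- `Ω_o(S)`: the MIO `S` with an output queue for `o ⊆ out_S`, i.e. the
synchronous product of the renamed MIO `S_o^▷` with the queue MIO `Q_o`. -/
noncomputable def Omega (o : Set A) (S : MIO A) (ho : o ⊆ S.out) : MIO (A ⊕ A) :=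
  syncComp (rename (tagged o) (tagged_injective o) S) (queueMIO o) (omega_composable o S ho)

/-- The outputs of `S` that are inputs of `T`. -/
def oOf (S T : MIO A) : Set A := S.out ∩ T.inp

/-- `Ω_{o_S}(S)` where `o_S = out_S ∩ in_T`. -/
noncomputable def OmegaC (S T : MIO A) : MIO (A ⊕ A) :=
  Omega (oOf S T) S Set.inter_subset_left

/-- Composability of the queue-extended MIOs, i.e. definedness of `S ⊗_as T`. -/
def AsyncComposable (S T : MIO A) : Prop := Composable (OmegaC S T) (OmegaC T S)

/-- Asynchronous composition `S ⊗_as T = Ω_{o_S}(S) ⊗_sy Ω_{o_T}(T)`. -/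
noncomputable def asyncComp (S T : MIO A) (h : AsyncComposable S T) : MIO (A ⊕ A) :=
  syncComp (OmegaC S T) (OmegaC T S) h

/-- Asynchronous modal compatibility `S ⇄_ac T`. -/
def AsyncCompat (S T : MIO A) : Prop :=
  Composable S T ∧ WeakCompat (OmegaC S T) (OmegaC T S)

end MIO

open MIO

/-! The relational composite of the two refinement relations is again a weak modal
refinement relation. A `τ*`-sequence of must-steps in the middle MIO `T` is matched step by
step by one in `S`; so a weak must-step `τ* a τ*` of `T` answering a must-step of `U` is
matched in `S` piece by piece, and the `τ*` prefixes and suffixes concatenate. May-steps of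
`S` travel up to `U` symmetrically. -/

namespace MIO

variable {A : Type} {S T U : MIO A}

def IsWeakModalSim (S T : MIO A) (R : S.State → T.State → Prop) : Prop :=
  ∀ s t, R s t →
    (∀ a ∈ T.inp ∪ T.out, ∀ t', T.must t a t' →
      ∃ s1 s2 s', S.tauMustStar s s1 ∧ S.must s1 a s2 ∧ S.tauMustStar s2 s' ∧ R s' t') ∧
    (∀ a ∈ T.intl, ∀ t', T.must t a t' → ∃ s', S.tauMustStar s s' ∧ R s' t') ∧
    (∀ a ∈ S.inp ∪ S.out, ∀ s', S.may s a s' →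
      ∃ t1 t2 t', T.tauMayStar t t1 ∧ T.may t1 a t2 ∧ T.tauMayStar t2 t' ∧ R s' t') ∧
    (∀ a ∈ S.intl, ∀ s', S.may s a s' → ∃ t', T.tauMayStar t t' ∧ R s' t')

theorem weakRefines_iff :
    WeakRefines S T ↔ SigEq S T ∧ ∃ R, R S.start T.start ∧ IsWeakModalSim S T R :=
  Iff.rfl

theorem SigEq.trans (hST : SigEq S T) (hTU : SigEq T U) : SigEq S U :=
  ⟨hST.1.trans hTU.1, hST.2.1.trans hTU.2.1, hST.2.2.trans hTU.2.2⟩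

theorem SigEq.inp_union_out (h : SigEq S T) : S.inp ∪ S.out = T.inp ∪ T.out := by
  rw [h.1, h.2.1]

namespace IsWeakModalSim

variable {R : S.State → T.State → Prop} {s : S.State} {t : T.State}

theorem exists_tauMustStar (hR : IsWeakModalSim S T R) (hst : R s t) {t' : T.State}
    (h : T.tauMustStar t t') : ∃ s', S.tauMustStar s s' ∧ R s' t' := by
  induction h with
  | refl => exact ⟨s, .refl, hst⟩
  | tail _ hstep ih =>
    obtain ⟨s1, hss1, hR1⟩ := ih
    obtain ⟨a, ha, hmust⟩ := hstep
    obtain ⟨s', hs1s', hR'⟩ := (hR _ _ hR1).2.1 a ha _ hmust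
    exact ⟨s', hss1.trans hs1s', hR'⟩

theorem exists_tauMayStar (hR : IsWeakModalSim S T R) (hst : R s t) {s' : S.State}
    (h : S.tauMayStar s s') : ∃ t', T.tauMayStar t t' ∧ R s' t' := by
  induction h with
  | refl => exact ⟨t, .refl, hst⟩
  | tail _ hstep ih =>
    obtain ⟨t1, htt1, hR1⟩ := ih
    obtain ⟨a, ha, hmay⟩ := hstep
    obtain ⟨t', ht1t', hR'⟩ := (hR _ _ hR1).2.2.2 a ha _ hmay
    exact ⟨t', htt1.trans ht1t', hR'⟩

theorem comp {R₁ : S.State → T.State → Prop} {R₂ : T.State → U.State → Prop}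
    (hS : S.inp ∪ S.out ⊆ T.inp ∪ T.out) (hU : U.inp ∪ U.out ⊆ T.inp ∪ T.out)
    (h₁ : IsWeakModalSim S T R₁) (h₂ : IsWeakModalSim T U R₂) :
    IsWeakModalSim S U (Relation.Comp R₁ R₂) := by
  rintro s u ⟨t, hst, htu⟩
  refine ⟨?mustVis, ?mustIntl, ?mayVis, ?mayIntl⟩
  case mustVis =>
    intro a ha u' hmust
    obtain ⟨t1, t2, t', htt1, hmust₁, ht2t', ht'u'⟩ := (h₂ t u htu).1 a ha u' hmust
    obtain ⟨s1, hss1, hs1t1⟩ := h₁.exists_tauMustStar hst htt1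
    obtain ⟨s2, s3, s4, hs1s2, hmust₂, hs3s4, hs4t2⟩ :=
      (h₁ s1 t1 hs1t1).1 a (hU ha) t2 hmust₁
    obtain ⟨s', hs4s', hs't'⟩ := h₁.exists_tauMustStar hs4t2 ht2t'
    exact ⟨s2, s3, s', hss1.trans hs1s2, hmust₂, hs3s4.trans hs4s', t', hs't', ht'u'⟩
  case mustIntl =>
    intro a ha u' hmust
    obtain ⟨t', htt', ht'u'⟩ := (h₂ t u htu).2.1 a ha u' hmust
    obtain ⟨s', hss', hs't'⟩ := h₁.exists_tauMustStar hst htt'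
    exact ⟨s', hss', t', hs't', ht'u'⟩
  case mayVis =>
    intro a ha s' hmay
    obtain ⟨t1, t2, t', htt1, hmay₁, ht2t', hs't'⟩ := (h₁ s t hst).2.2.1 a ha s' hmay
    obtain ⟨u1, huu1, ht1u1⟩ := h₂.exists_tauMayStar htu htt1
    obtain ⟨u2, u3, u4, hu1u2, hmay₂, hu3u4, ht2u4⟩ :=
      (h₂ t1 u1 ht1u1).2.2.1 a (hS ha) t2 hmay₁
    obtain ⟨u', hu4u', ht'u'⟩ := h₂.exists_tauMayStar ht2u4 ht2t'
    exact ⟨u2, u3, u', huu1.trans hu1u2, hmay₂, hu3u4.trans hu4u', t', hs't', ht'u'⟩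
  case mayIntl =>
    intro a ha s' hmay
    obtain ⟨t', htt', hs't'⟩ := (h₁ s t hst).2.2.2 a ha s' hmay
    obtain ⟨u', huu', ht'u'⟩ := h₂.exists_tauMayStar htu htt'
    exact ⟨u', huu', t', hs't', ht'u'⟩

end IsWeakModalSim

theorem WeakRefines.trans (hST : WeakRefines S T) (hTU : WeakRefines T U) :
    WeakRefines S U := by
  obtain ⟨hsigST, R₁, hstart₁, hR₁⟩ := weakRefines_iff.mp hST
  obtain ⟨hsigTU, R₂, hstart₂, hR₂⟩ := weakRefines_iff.mp hTU
  refine weakRefines_iff.mpr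
    ⟨hsigST.trans hsigTU, Relation.Comp R₁ R₂, ⟨T.start, hstart₁, hstart₂⟩, ?_⟩
  exact hR₁.comp hsigST.inp_union_out.subset hsigTU.inp_union_out.symm.subset hR₂

end MIO

theorem weakRefines_trans_general (A : Type) (S T U : MIO A) :
    WeakRefines S T → WeakRefines T U → WeakRefines S U :=
  fun hST hTU => hST.trans hTU

/-- Weak modal refinement is transitive (for MIOs with the same signature). -/
theorem weakRefines_trans (A : Type) (S T U : MIO A)
    (hST : SigEq S T) (hTU : SigEq T U) :
    WeakRefines S T → WeakRefines T U → WeakRefines S U :=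
  weakRefines_trans_general A S T U
end

section
/- Strong modal refinement is compositional with respect to synchronous composition: if S' ≤_m S, T' ≤_m T, and S and T are composable, then S' and T' are composable and S' ⊗_sy T' ≤_m S ⊗_sy T. -/
open MIO

/-! Both the may- and the must-relation of `S ⊗_sy T` arise from those of the components by the
same product construction, and this construction carries a pair of simulations to a simulation
of the products. Refinement preserves signatures, so the shared actions, and with them
composability and the signature of the product, do not change. -/

namespace MIO

variable {A : Type}

section Simulation

variable {X Y X' Y' : Type}

def Simulates (stepX : X → A → X → Prop) (stepY : Y → A → Y → Prop) (R : X → Y → Prop) :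
    Prop :=
  ∀ x y, R x y → ∀ a x', stepX x a x' → ∃ y', stepY y a y' ∧ R x' y'

def syncStep (sh actX actY : Set A) (stepX : X → A → X → Prop) (stepY : Y → A → Y → Prop)
    (p : X × Y) (a : A) (p' : X × Y) : Prop :=
  (a ∈ sh ∧ stepX p.1 a p'.1 ∧ stepY p.2 a p'.2) ∨
  (a ∈ actX ∧ a ∉ sh ∧ stepX p.1 a p'.1 ∧ p'.2 = p.2) ∨
  (a ∈ actY ∧ a ∉ sh ∧ stepY p.2 a p'.2 ∧ p'.1 = p.1)

theorem Simulates.syncStep {sh actX actY sh' actX' actY' : Set A}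
    {stepX : X → A → X → Prop} {stepY : Y → A → Y → Prop}
    {stepX' : X' → A → X' → Prop} {stepY' : Y' → A → Y' → Prop}
    {RX : X → X' → Prop} {RY : Y → Y' → Prop}
    (hX : Simulates stepX stepX' RX) (hY : Simulates stepY stepY' RY)
    (hsh : sh = sh') (hactX : actX ⊆ actX') (hactY : actY ⊆ actY') :
    Simulates (syncStep sh actX actY stepX stepY) (syncStep sh' actX' actY' stepX' stepY')
      (fun p q => RX p.1 q.1 ∧ RY p.2 q.2) := by
  subst hsh
  rintro ⟨x, y⟩ ⟨x', y'⟩ ⟨hxx', hyy'⟩ a ⟨x₂, y₂⟩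
    (⟨ha, hx, hy⟩ | ⟨ha, hna, hx, rfl⟩ | ⟨ha, hna, hy, rfl⟩)
  · obtain ⟨x₂', hx', hR₁⟩ := hX x x' hxx' a x₂ hx
    obtain ⟨y₂', hy', hR₂⟩ := hY y y' hyy' a y₂ hy
    exact ⟨(x₂', y₂'), Or.inl ⟨ha, hx', hy'⟩, hR₁, hR₂⟩
  · obtain ⟨x₂', hx', hR₁⟩ := hX x x' hxx' a x₂ hx
    exact ⟨(x₂', y'), Or.inr (Or.inl ⟨hactX ha, hna, hx', rfl⟩), hR₁, hyy'⟩
  · obtain ⟨y₂', hy', hR₂⟩ := hY y y' hyy' a y₂ hy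
    exact ⟨(x', y₂'), Or.inr (Or.inr ⟨hactY ha, hna, hy', rfl⟩), hxx', hR₂⟩

end Simulation

theorem strongRefines_iff_simulates {S T : MIO A} :
    StrongRefines S T ↔ SigEq S T ∧ ∃ R : S.State → T.State → Prop, R S.start T.start ∧
      Simulates T.must S.must (flip R) ∧ Simulates S.may T.may R := by
  refine and_congr_right fun _ => exists_congr fun R => and_congr_right fun _ => ?_
  exact ⟨fun h => ⟨fun t s hR => (h s t hR).1, fun s t hR => (h s t hR).2⟩,
    fun h s t hR => ⟨h.1 t s hR, h.2 s t hR⟩⟩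

namespace SigEq

variable {S S' T T' : MIO A}

theorem act_eq (hS : SigEq S' S) : S'.act = S.act := by
  obtain ⟨hi, ho, hl⟩ := hS
  rw [act, act, hi, ho, hl]

theorem shared_eq (hS : SigEq S' S) (hT : SigEq T' T) : shared S' T' = shared S T := by
  rw [shared, shared, hS.act_eq, hT.act_eq]

theorem composable (hS : SigEq S' S) (hT : SigEq T' T) (h : Composable S T) :
    Composable S' T' := by
  rw [Composable, hS.shared_eq hT, hS.1, hS.2.1, hT.1, hT.2.1]
  exact h

theorem syncComp (hS : SigEq S' S) (hT : SigEq T' T) (h' : Composable S' T')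
    (h : Composable S T) : SigEq (syncComp S' T' h') (syncComp S T h) := by
  have hsh := hS.shared_eq hT
  obtain ⟨hSi, hSo, hSl⟩ := hS
  obtain ⟨hTi, hTo, hTl⟩ := hT
  refine ⟨?_, ?_, ?_⟩ <;> simp only [MIO.syncComp, hSi, hSo, hSl, hTi, hTo, hTl, hsh]

end SigEq

end MIO

/-- Strong modal refinement is compositional w.r.t. synchronous composition. -/
theorem strongRefines_compositional (A : Type) (S S' T T' : MIO A)
    (hS : StrongRefines S' S) (hT : StrongRefines T' T) (h : Composable S T) :
    Composable S' T' ∧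
    ∀ h' : Composable S' T', StrongRefines (syncComp S' T' h') (syncComp S T h) := by
  obtain ⟨hSsig, RS, hRS₀, hRS_must, hRS_may⟩ := strongRefines_iff_simulates.1 hS
  obtain ⟨hTsig, RT, hRT₀, hRT_must, hRT_may⟩ := strongRefines_iff_simulates.1 hT
  refine ⟨hSsig.composable hTsig h, fun h' => strongRefines_iff_simulates.2
    ⟨hSsig.syncComp hTsig h' h, fun p q => RS p.1 q.1 ∧ RT p.2 q.2, ⟨hRS₀, hRT₀⟩, ?_, ?_⟩⟩
  · exact hRS_must.syncStep hRT_must (hSsig.shared_eq hTsig).symm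
      hSsig.act_eq.ge hTsig.act_eq.ge
  · exact hRS_may.syncStep hRT_may (hSsig.shared_eq hTsig) hSsig.act_eq.le hTsig.act_eq.le
end

section
/- Weak modal refinement is compositional with respect to synchronous composition: if S' ≤_m* S, T' ≤_m* T, and S and T are composable, then S' and T' are composable and S' ⊗_sy T' ≤_m* S ⊗_sy T. -/
open MIO

/-! The product of weak refinement relations for the components is a weak refinement relation
for the compositions. A move of a composition is either a local move of one component, answered by
the matching weak move of its counterpart while the other component stays idle, or a
synchronisation on a shared action `a`. Composability makes such an `a` visible in both components,
so the two answering moves `τ* a τ*` interleave into internal moves of the composition around one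
synchronised `a`-move, which is itself internal there. The must- and the may-clauses of weak
refinement are one and the same argument, with the roles of the refined and the abstract MIO
exchanged. -/

namespace MIO

variable {A : Type}

inductive Modality
  | must
  | may

def step (M : MIO A) : Modality → M.State → A → M.State → Prop
  | .must => M.must
  | .may => M.may

def tauStep (M : MIO A) (m : Modality) (s s' : M.State) : Prop := ∃ a ∈ M.intl, M.step m s a s'

def tauStar (M : MIO A) (m : Modality) : M.State → M.State → Prop :=
  Relation.ReflTransGen (M.tauStep m)

def WeakSim (m : Modality) (X Y : MIO A) (R : X.State → Y.State → Prop) : Prop :=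
  ∀ x y, R x y →
    (∀ a ∈ X.inp ∪ X.out, ∀ x', X.step m x a x' →
      ∃ y₁ y₂ y', Y.tauStar m y y₁ ∧ Y.step m y₁ a y₂ ∧ Y.tauStar m y₂ y' ∧ R x' y') ∧
    (∀ a ∈ X.intl, ∀ x', X.step m x a x' → ∃ y', Y.tauStar m y y' ∧ R x' y')

theorem weakRefines_iff_s7 {S T : MIO A} :
    WeakRefines S T ↔ SigEq S T ∧ ∃ R : S.State → T.State → Prop, R S.start T.start ∧
      WeakSim .must T S (flip R) ∧ WeakSim .may S T R := by
  refine and_congr_right fun _ => exists_congr fun R => and_congr_right fun _ => ?_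
  constructor
  · intro hR
    exact ⟨fun t s hst => ⟨(hR s t hst).1, (hR s t hst).2.1⟩,
      fun s t hst => ⟨(hR s t hst).2.2.1, (hR s t hst).2.2.2⟩⟩
  · rintro ⟨hmust, hmay⟩ s t hst
    exact ⟨(hmust t s hst).1, (hmust t s hst).2, (hmay s t hst).1, (hmay s t hst).2⟩

section Signature

variable {S S' T T' : MIO A}

theorem SigEq.symm (h : SigEq S T) : SigEq T S :=
  ⟨h.1.symm, h.2.1.symm, h.2.2.symm⟩

theorem SigEq.act_eq_s7 (h : SigEq S T) : S.act = T.act := by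
  simp only [act, h.1, h.2.1, h.2.2]

theorem SigEq.shared_eq_s7 (hS : SigEq S' S) (hT : SigEq T' T) : shared S' T' = shared S T := by
  simp only [shared, hS.act_eq_s7, hT.act_eq_s7]

theorem Composable.of_sigEq (h : Composable S T) (hS : SigEq S' S) (hT : SigEq T' T) :
    Composable S' T' := by
  rw [Composable, hS.shared_eq_s7 hT, hS.1, hS.2.1, hT.1, hT.2.1]
  exact h

theorem sigEq_syncComp (hS : SigEq S' S) (hT : SigEq T' T) (h' : Composable S' T')
    (h : Composable S T) : SigEq (syncComp S' T' h') (syncComp S T h) := by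
  simp only [SigEq, syncComp, hS.shared_eq_s7 hT, hS.1, hS.2.1, hS.2.2, hT.1, hT.2.1, hT.2.2,
    and_self]

end Signature

section Actions

variable {M S T : MIO A} {a : A}

theorem not_mem_intl_of_visible (ha : a ∈ M.inp ∪ M.out) : a ∉ M.intl :=
  ha.elim (M.inp_intl a) (M.out_intl a)

theorem visible_of_mem_act (ha : a ∈ M.act) (hi : a ∉ M.intl) : a ∈ M.inp ∪ M.out :=
  ha.resolve_right hi

theorem Composable.visible_left (h : Composable S T) (ha : a ∈ shared S T) :
    a ∈ S.inp ∪ S.out :=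
  (h ha).elim (fun h => Or.inl h.1) (fun h => Or.inr h.2)

theorem Composable.visible_right (h : Composable S T) (ha : a ∈ shared S T) :
    a ∈ T.inp ∪ T.out :=
  (h ha).elim (fun h => Or.inr h.2) (fun h => Or.inl h.1)

theorem Composable.not_shared_of_intl_left (h : Composable S T) (ha : a ∈ S.intl) :
    a ∉ shared S T :=
  fun hsh => not_mem_intl_of_visible (h.visible_left hsh) ha

theorem Composable.not_shared_of_intl_right (h : Composable S T) (ha : a ∈ T.intl) :
    a ∉ shared S T :=
  fun hsh => not_mem_intl_of_visible (h.visible_right hsh) ha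

theorem mem_intl_left_of_syncComp {h : Composable S T} (ha : a ∈ (syncComp S T h).intl)
    (haS : a ∈ S.act) (hsh : a ∉ shared S T) : a ∈ S.intl := by
  rcases ha with (ha | ha) | ha
  · exact ha
  · exact absurd ⟨haS, Or.inr ha⟩ hsh
  · exact absurd ha hsh

theorem mem_intl_right_of_syncComp {h : Composable S T} (ha : a ∈ (syncComp S T h).intl)
    (haT : a ∈ T.act) (hsh : a ∉ shared S T) : a ∈ T.intl := by
  rcases ha with (ha | ha) | ha
  · exact absurd ⟨Or.inr ha, haT⟩ hsh
  · exact ha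
  · exact absurd ha hsh

end Actions

section Steps

variable {S T : MIO A} (h : Composable S T) {m : Modality}

theorem step_syncComp {p p' : S.State × T.State} {a : A} :
    (syncComp S T h).step m p a p' ↔
      (a ∈ shared S T ∧ S.step m p.1 a p'.1 ∧ T.step m p.2 a p'.2) ∨
      (a ∈ S.act ∧ a ∉ shared S T ∧ S.step m p.1 a p'.1 ∧ p'.2 = p.2) ∨
      (a ∈ T.act ∧ a ∉ shared S T ∧ T.step m p.2 a p'.2 ∧ p'.1 = p.1) := by
  cases m <;> rfl

theorem tauStar_syncComp_left {s s' : S.State} (t : T.State) (hs : S.tauStar m s s') :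
    (syncComp S T h).tauStar m (s, t) (s', t) := by
  refine Relation.ReflTransGen.lift (fun x => (x, t)) (fun x x' ⟨a, ha, hx⟩ => ?_) _ _ hs
  exact ⟨a, Or.inl (Or.inl ha),
    (step_syncComp h).2 (Or.inr (Or.inl ⟨Or.inr ha, h.not_shared_of_intl_left ha, hx, rfl⟩))⟩

theorem tauStar_syncComp_right (s : S.State) {t t' : T.State} (ht : T.tauStar m t t') :
    (syncComp S T h).tauStar m (s, t) (s, t') := by
  refine Relation.ReflTransGen.lift (fun y => (s, y)) (fun y y' ⟨a, ha, hy⟩ => ?_) _ _ ht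
  exact ⟨a, Or.inl (Or.inr ha),
    (step_syncComp h).2 (Or.inr (Or.inr ⟨Or.inr ha, h.not_shared_of_intl_right ha, hy, rfl⟩))⟩

theorem tauStar_syncComp_of_shared {a : A} (ha : a ∈ shared S T)
    {s s₁ s₂ s' : S.State} (hs₁ : S.tauStar m s s₁) (hs : S.step m s₁ a s₂)
    (hs₂ : S.tauStar m s₂ s') {t t₁ t₂ t' : T.State} (ht₁ : T.tauStar m t t₁)
    (ht : T.step m t₁ a t₂) (ht₂ : T.tauStar m t₂ t') :
    (syncComp S T h).tauStar m (s, t) (s', t') := by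
  have hsync : (syncComp S T h).tauStep m (s₁, t₁) (s₂, t₂) :=
    ⟨a, Or.inr ha, (step_syncComp h).2 (Or.inl ⟨ha, hs, ht⟩)⟩
  exact (tauStar_syncComp_left h t hs₁).trans <| (tauStar_syncComp_right h s₁ ht₁).trans <|
    (Relation.ReflTransGen.single hsync).trans <|
      (tauStar_syncComp_left h t₂ hs₂).trans (tauStar_syncComp_right h s' ht₂)

end Steps

section Simulation

variable {m : Modality} {X X' Y Y' : MIO A} {R : X.State → Y.State → Prop}
  {R' : X'.State → Y'.State → Prop}

theorem WeakSim.syncComp (hR : WeakSim m X Y R) (hR' : WeakSim m X' Y' R')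
    (hXY : SigEq X Y) (hXY' : SigEq X' Y') (hX : Composable X X') (hY : Composable Y Y') :
    WeakSim m (syncComp X X' hX) (syncComp Y Y' hY) fun p q => R p.1 q.1 ∧ R' p.2 q.2 := by
  have hsh : shared Y Y' = shared X X' := hXY.symm.shared_eq_s7 hXY'.symm
  rintro ⟨x, x'⟩ ⟨y, y'⟩ ⟨hr, hr'⟩
  obtain ⟨hvis, hint⟩ := hR x y hr
  obtain ⟨hvis', hint'⟩ := hR' x' y' hr'
  constructor
  · rintro a ha ⟨x₁, x₁'⟩ hstep
    have hai := not_mem_intl_of_visible ha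
    rcases (step_syncComp hX).1 hstep with ⟨hs, -⟩ | ⟨haX, hns, hx, rfl⟩ | ⟨haX', hns, hx, rfl⟩
    · exact absurd (Or.inr hs) hai
    · obtain ⟨y₁, y₂, y₃, hy₁, hy, hy₂, hr₃⟩ :=
        hvis a (visible_of_mem_act haX fun hi => hai (Or.inl (Or.inl hi))) x₁ hx
      exact ⟨(y₁, y'), (y₂, y'), (y₃, y'), tauStar_syncComp_left hY y' hy₁,
        (step_syncComp hY).2 (Or.inr (Or.inl ⟨hXY.act_eq_s7 ▸ haX, hsh ▸ hns, hy, rfl⟩)),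
        tauStar_syncComp_left hY y' hy₂, hr₃, hr'⟩
    · obtain ⟨y₁, y₂, y₃, hy₁, hy, hy₂, hr₃⟩ :=
        hvis' a (visible_of_mem_act haX' fun hi => hai (Or.inl (Or.inr hi))) x₁' hx
      exact ⟨(y, y₁), (y, y₂), (y, y₃), tauStar_syncComp_right hY y hy₁,
        (step_syncComp hY).2 (Or.inr (Or.inr ⟨hXY'.act_eq_s7 ▸ haX', hsh ▸ hns, hy, rfl⟩)),
        tauStar_syncComp_right hY y hy₂, hr, hr₃⟩
  · rintro a ha ⟨x₁, x₁'⟩ hstep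
    rcases (step_syncComp hX).1 hstep with ⟨hs, hx, hx'⟩ | ⟨haX, hns, hx, rfl⟩ |
      ⟨haX', hns, hx, rfl⟩
    · obtain ⟨y₁, y₂, y₃, hy₁, hy, hy₂, hr₃⟩ := hvis a (hX.visible_left hs) x₁ hx
      obtain ⟨y₁', y₂', y₃', hy₁', hy', hy₂', hr₃'⟩ := hvis' a (hX.visible_right hs) x₁' hx'
      exact ⟨(y₃, y₃'),
        tauStar_syncComp_of_shared hY (hsh ▸ hs) hy₁ hy hy₂ hy₁' hy' hy₂', hr₃, hr₃'⟩
    · obtain ⟨y₁, hy, hr₁⟩ := hint a (mem_intl_left_of_syncComp ha haX hns) x₁ hx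
      exact ⟨(y₁, y'), tauStar_syncComp_left hY y' hy, hr₁, hr'⟩
    · obtain ⟨y₁, hy, hr₁⟩ := hint' a (mem_intl_right_of_syncComp ha haX' hns) x₁' hx
      exact ⟨(y, y₁), tauStar_syncComp_right hY y hy, hr, hr₁⟩

end Simulation

end MIO

/-- Weak modal refinement is compositional w.r.t. synchronous composition. -/
theorem weakRefines_compositional (A : Type) (S S' T T' : MIO A)
    (hS : WeakRefines S' S) (hT : WeakRefines T' T) (h : Composable S T) :
    Composable S' T' ∧
    ∀ h' : Composable S' T', WeakRefines (syncComp S' T' h') (syncComp S T h) := by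
  obtain ⟨hS, RS, hRS₀, hRS_must, hRS_may⟩ := weakRefines_iff_s7.1 hS
  obtain ⟨hT, RT, hRT₀, hRT_must, hRT_may⟩ := weakRefines_iff_s7.1 hT
  refine ⟨h.of_sigEq hS hT, fun h' => weakRefines_iff_s7.2 ⟨sigEq_syncComp hS hT h' h,
    fun p q => RS p.1 q.1 ∧ RT p.2 q.2, ⟨hRS₀, hRT₀⟩, ?_, ?_⟩⟩
  · exact hRS_must.syncComp hRT_must hS.symm hT.symm h h'
  · exact hRS_may.syncComp hRT_may hS hT h' h
end

section
/- Asynchronous composition of composable MIOs is well-defined: if S and T are composable MIOs, with o_S = out_S ∩ in_T and o_T = out_T ∩ in_S, then Ω_{o_S}(S) and Ω_{o_T}(T) are composable, so S ⊗_as T = Ω_{o_S}(S) ⊗_sy Ω_{o_T}(T) is a well-defined MIO. -/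
namespace MIO

variable {A B : Type}

lemma out_subset_act (S : MIO A) : S.out ⊆ S.act :=
  fun _ ha => Or.inl (Or.inr ha)

lemma act_syncComp (S T : MIO A) (h : Composable S T) :
    (syncComp S T h).act = S.act ∪ T.act := by
  ext a
  have hshared : a ∈ shared S T → a ∈ S.act := And.left
  simp only [act, syncComp, Set.mem_union, Set.mem_sdiff] at hshared ⊢
  tauto

lemma act_rename (f : A → B) (hf : Function.Injective f) (S : MIO A) :
    (rename f hf S).act = f '' S.act := by
  simp only [rename, act, Set.image_union]

lemma act_queueMIO (o : Set A) : (queueMIO o).act = Sum.inr '' o ∪ Sum.inl '' o := by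
  simp only [queueMIO, act, Set.union_empty]

lemma inl_notMem_image_inr {a : A} {X : Set B} : (Sum.inl a : A ⊕ B) ∉ Sum.inr '' X := by
  simp

lemma inr_notMem_image_inl {b : B} {X : Set A} : (Sum.inr b : A ⊕ B) ∉ Sum.inl '' X := by
  simp

section Tagged

variable {o : Set A} {a : A} {X : Set A}

lemma tagged_of_mem (h : a ∈ o) : tagged o a = Sum.inr a := by
  simp [tagged, h]

lemma tagged_of_notMem (h : a ∉ o) : tagged o a = Sum.inl a := by
  simp [tagged, h]

lemma inl_mem_image_tagged : Sum.inl a ∈ tagged o '' X ↔ a ∈ X ∧ a ∉ o := by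
  constructor
  · rintro ⟨x, hx, hxa⟩
    by_cases hxo : x ∈ o <;> simp_all [tagged_of_mem, tagged_of_notMem]
  · rintro ⟨ha, hao⟩
    exact ⟨a, ha, tagged_of_notMem hao⟩

lemma inr_mem_image_tagged : Sum.inr a ∈ tagged o '' X ↔ a ∈ X ∧ a ∈ o := by
  constructor
  · rintro ⟨x, hx, hxa⟩
    by_cases hxo : x ∈ o <;> simp_all [tagged_of_mem, tagged_of_notMem]
  · rintro ⟨ha, hao⟩
    exact ⟨a, ha, tagged_of_mem hao⟩

end Tagged

section Omega

variable {o : Set A} {S : MIO A} (ho : o ⊆ S.out)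
include ho

lemma shared_rename_tagged_queueMIO :
    shared (rename (tagged o) (tagged_injective o) S) (queueMIO o) = Sum.inr '' o := by
  ext (a | a)
  all_goals
    have hoact : a ∈ o → a ∈ S.act := fun hao => S.out_subset_act (ho hao)
    simp only [shared, act_rename, act_queueMIO, Set.mem_inter_iff, Set.mem_union,
      inl_mem_image_tagged, inr_mem_image_tagged, Sum.inl_injective.mem_set_image,
      Sum.inr_injective.mem_set_image, inl_notMem_image_inr, inr_notMem_image_inl]
    tauto

lemma inp_Omega : (Omega o S ho).inp = Sum.inl '' S.inp := by
  change (tagged o '' S.inp ∪ Sum.inr '' o) \ shared _ _ = _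
  rw [shared_rename_tagged_queueMIO ho]
  ext (a | a)
  all_goals
    have hinp : a ∈ S.inp → a ∉ o := fun ha hao => S.inp_out a ha (ho hao)
    simp only [Set.mem_sdiff, Set.mem_union, inl_mem_image_tagged, inr_mem_image_tagged,
      Sum.inl_injective.mem_set_image, Sum.inr_injective.mem_set_image, inl_notMem_image_inr,
      inr_notMem_image_inl]
    tauto

lemma out_Omega : (Omega o S ho).out = Sum.inl '' S.out := by
  change (tagged o '' S.out ∪ Sum.inl '' o) \ shared _ _ = _
  rw [shared_rename_tagged_queueMIO ho]
  ext (a | a)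
  all_goals
    have hout : a ∈ o → a ∈ S.out := @ho a
    simp only [Set.mem_sdiff, Set.mem_union, inl_mem_image_tagged, inr_mem_image_tagged,
      Sum.inl_injective.mem_set_image, Sum.inr_injective.mem_set_image, inl_notMem_image_inr,
      inr_notMem_image_inl]
    tauto

lemma act_Omega : (Omega o S ho).act = Sum.inl '' S.act ∪ Sum.inr '' o := by
  ext (a | a)
  all_goals
    have hoact : a ∈ o → a ∈ S.act := fun hao => S.out_subset_act (ho hao)
    simp only [Omega, act_syncComp, act_rename, act_queueMIO, Set.mem_union,
      inl_mem_image_tagged, inr_mem_image_tagged, Sum.inl_injective.mem_set_image,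
      Sum.inr_injective.mem_set_image, inl_notMem_image_inr, inr_notMem_image_inl]
    tauto

end Omega

end MIO

open MIO

/-- Asynchronous composition of composable MIOs is well-defined: for composable
`S`, `T` the queue-extended MIOs `Ω_{o_S}(S)` and `Ω_{o_T}(T)` are composable,
so `S ⊗_as T = Ω_{o_S}(S) ⊗_sy Ω_{o_T}(T)` is a well-defined MIO. -/
theorem asyncComp_defined (A : Type) (S T : MIO A) (h : Composable S T) :
    AsyncComposable S T := by
  rintro (a | a) ⟨haS, haT⟩
  all_goals
    simp only [OmegaC, act_Omega, inp_Omega, out_Omega, oOf, Set.mem_union, Set.mem_inter_iff,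
      Sum.inl_injective.mem_set_image, Sum.inr_injective.mem_set_image, inl_notMem_image_inr,
      inr_notMem_image_inl, and_false, or_false, false_or] at haS haT ⊢
  · exact h ⟨haS, haT⟩
  · exact S.inp_out a haT.2 haS.1
end
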